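/- Let (X, σ) be a subshift whose every point x has the property: for all ε > 0 there is a syndetic set S ⊆ ℕ such that for every s ∈ S the set {t ∈ ℤ : x_t ≠ (σ^s x)_t} has upper density less than ε (mean almost periodicity). Given words u, v with |v| < |u| such that every x ∈ X is a bi-infinite concatenation of u and v with no three consecutive u's, and given s = |v|, the upper density of {t : x_t ≠ (σ^{|v|}x)_t} is at most (2/L)·max(d(vu, uv), d(vu², u²v)) where L is any lower bound on the gap between consecutive starting positions of the u/v-blocks of the form v^i u^j; in particular it is at most 4·d(uv, vu)/L′ where L′ is a lower bound for the lengths of the blocks v^i u^j (j ≤ 2) in the decomposition. -/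

import Mathlib

/-- `wordPow v n` is the word `v` repeated `n` times. -/
def wordPow {A : Type*} (v : List A) (n : ℕ) : List A := (List.replicate n v).flatten

/-- Hamming distance of two words (of the same length). -/
def hammingDistL {A : Type*} [DecidableEq A] (w x : List A) : ℕ :=
  (List.zipWith (fun a b => if a = b then 0 else 1) w x).sum

/-- The left shift on bi-infinite sequences. -/
def shiftMap {A : Type*} (x : ℤ → A) : ℤ → A := fun n => x (n + 1)

/-- The set `D ⊆ ℤ` has upper density at most `c`. -/
def UpperDensityLE (D : Set ℤ) (c : ℝ) : Prop :=
  ∀ ε : ℝ, 0 < ε → ∃ N₀ : ℕ, ∀ N : ℕ, N₀ ≤ N → ∀ M : ℤ,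
    ((D ∩ Set.Icc (M + 1) (M + N)).ncard : ℝ) ≤ (c + ε) * N

/-- `S ⊆ ℕ` is syndetic: it has bounded gaps. -/
def Syndetic (S : Set ℕ) : Prop := ∃ g : ℕ, ∀ n : ℕ, ∃ s ∈ S, n ≤ s ∧ s ≤ n + g

/-! Shifting `x` by `|v|` turns each block `v^i u^j` into `v^(i-1) u^j v`, because the next block
starts with `v`; so the positions of a block where `x` and its shift disagree are counted by
`d(v u^j, u^j v)`. Blocks have length at least `L'`, so a window of length `N` meets at most
`N / L' + 2` of them, and the density of disagreements is at most `max_j d(v u^j, u^j v) / L'`.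
Finally `d(v u u, u u v) ≤ d(v u u, u v u) + d(u v u, u u v) = 2 d(u v, v u)`. -/

section Words

variable {A : Type*}

theorem wordPow_succ (v : List A) (n : ℕ) : wordPow v (n + 1) = v ++ wordPow v n := by
  simp [wordPow, List.replicate_succ]

theorem wordPow_succ' (v : List A) (n : ℕ) : wordPow v (n + 1) = wordPow v n ++ v := by
  simp [wordPow, List.replicate_succ']

theorem wordPow_one (v : List A) : wordPow v 1 = v := by
  simp [wordPow]

theorem wordPow_two (v : List A) : wordPow v 2 = v ++ v := by
  simp [wordPow, List.replicate_succ]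

variable [DecidableEq A]

@[simp]
theorem hammingDistL_nil_left (w : List A) : hammingDistL [] w = 0 := rfl

theorem hammingDistL_cons_cons (a b : A) (w x : List A) :
    hammingDistL (a :: w) (b :: x) = (if a = b then 0 else 1) + hammingDistL w x := by
  simp [hammingDistL]

theorem hammingDistL_self (w : List A) : hammingDistL w w = 0 := by
  induction w with
  | nil => rfl
  | cons a w ih => simp [hammingDistL_cons_cons, ih]

theorem hammingDistL_comm (w x : List A) : hammingDistL w x = hammingDistL x w := by
  induction w generalizing x with
  | nil => cases x <;> rfl
  | cons a w ih =>
    cases x with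
    | nil => rfl
    | cons b x => simp only [hammingDistL_cons_cons, ih, eq_comm]

theorem hammingDistL_append_left (r w x : List A) :
    hammingDistL (r ++ w) (r ++ x) = hammingDistL w x := by
  induction r with
  | nil => rfl
  | cons a r ih => simp [hammingDistL_cons_cons, ih]

theorem hammingDistL_append_right {w x : List A} (h : w.length = x.length) (r : List A) :
    hammingDistL (w ++ r) (x ++ r) = hammingDistL w x := by
  induction w generalizing x with
  | nil => cases x with
    | nil => exact hammingDistL_self r
    | cons => simp at h
  | cons a w ih => cases x with
    | nil => simp at h
    | cons b x => simp [hammingDistL_cons_cons, ih (Nat.succ.inj h)]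

theorem hammingDistL_le_add {w x y : List A} (hwx : w.length = x.length)
    (hxy : x.length = y.length) : hammingDistL w y ≤ hammingDistL w x + hammingDistL x y := by
  induction w generalizing x y with
  | nil => simp
  | cons a w ih =>
    obtain _ | ⟨b, x⟩ := x
    · simp at hwx
    obtain _ | ⟨c, y⟩ := y
    · simp at hxy
    simp only [hammingDistL_cons_cons]
    have := ih (Nat.succ.inj hwx) (Nat.succ.inj hxy)
    split_ifs <;> subst_vars <;> first | omega | simp_all

end Words

section Reading

variable {A : Type*}

def ReadsAt (x : ℤ → A) (a : ℤ) (w : List A) : Prop :=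
  ∀ k : Fin w.length, x (a + k) = w.get k

theorem readsAt_cons {x : ℤ → A} {a : ℤ} {b : A} {w : List A} :
    ReadsAt x a (b :: w) ↔ x a = b ∧ ReadsAt x (a + 1) w := by
  simp only [ReadsAt, List.length_cons, Fin.forall_fin_succ, Fin.val_zero, Fin.val_succ]
  push_cast
  simp [add_assoc, add_comm (1 : ℤ)]

theorem readsAt_append {x : ℤ → A} {a : ℤ} {w w' : List A} :
    ReadsAt x a (w ++ w') ↔ ReadsAt x a w ∧ ReadsAt x (a + w.length) w' := by
  induction w generalizing a with
  | nil => simp [ReadsAt]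
  | cons b w ih =>
    simp only [List.cons_append, readsAt_cons, ih, List.length_cons]
    push_cast
    rw [add_assoc, add_comm 1 (w.length : ℤ), and_assoc]

theorem ncard_mismatch_Ico_eq_hammingDistL [DecidableEq A] {x : ℤ → A} {a k : ℤ}
    {w w' : List A} (hlen : w.length = w'.length) (hw : ReadsAt x a w)
    (hw' : ReadsAt x (a + k) w') :
    ({s | x s ≠ x (s + k)} ∩ Set.Ico a (a + w.length)).ncard = hammingDistL w w' := by
  induction w generalizing a w' with
  | nil => simp
  | cons b w ih =>
    obtain _ | ⟨c, w'⟩ := w'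
    · simp at hlen
    rw [readsAt_cons] at hw hw'
    have hrest := ih (Nat.succ.inj hlen) hw.2 (by rw [add_right_comm]; exact hw'.2)
    have hIco :
        Set.Ico a (a + (b :: w).length) = insert a (Set.Ico (a + 1) (a + 1 + w.length)) := by
      ext s; simp only [List.length_cons, Set.mem_Ico, Set.mem_insert_iff]; push_cast; omega
    rw [hammingDistL_cons_cons, ← hrest, hIco]
    by_cases hbc : b = c
    · have ha : a ∉ {s | x s ≠ x (s + k)} := by simp [hw.1, hw'.1, hbc]
      rw [Set.inter_insert_of_notMem ha, if_pos hbc, zero_add]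
    · have ha : a ∈ {s | x s ≠ x (s + k)} := by simp [hw.1, hw'.1, hbc]
      rw [Set.inter_insert_of_mem ha, if_neg hbc, add_comm 1,
        Set.ncard_insert_of_notMem (by simp) ((Set.finite_Ico _ _).inter_of_right _)]

end Reading

theorem ncard_mismatch_block_eq_hammingDistL {A : Type*} [DecidableEq A] {x : ℤ → A} {a : ℤ}
    (u v : List A) (i j : ℕ) (h : ReadsAt x a (wordPow v (i + 1) ++ wordPow u j ++ v)) :
    ({s | x s ≠ x (s + v.length)} ∩
        Set.Ico a (a + (wordPow v (i + 1) ++ wordPow u j).length)).ncard =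
      hammingDistL (v ++ wordPow u j) (wordPow u j ++ v) := by
  have hblock := (readsAt_append.1 h).1
  have hshifted : ReadsAt x (a + v.length) (wordPow v i ++ (wordPow u j ++ v)) := by
    simp only [wordPow_succ, List.append_assoc] at h
    exact (readsAt_append.1 h).2
  rw [ncard_mismatch_Ico_eq_hammingDistL (by simp [wordPow_succ']; omega) hblock hshifted,
    wordPow_succ', List.append_assoc, hammingDistL_append_left]

theorem max_hammingDistL_le {A : Type*} [DecidableEq A] (u v : List A) :
    max (hammingDistL (v ++ u) (u ++ v)) (hammingDistL (v ++ (u ++ u)) ((u ++ u) ++ v)) ≤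
      2 * hammingDistL (u ++ v) (v ++ u) := by
  have hcomm : hammingDistL (v ++ u) (u ++ v) = hammingDistL (u ++ v) (v ++ u) :=
    hammingDistL_comm _ _
  have hfirst :
      hammingDistL (v ++ (u ++ u)) (u ++ (v ++ u)) = hammingDistL (u ++ v) (v ++ u) := by
    simpa only [List.append_assoc, hcomm] using
      hammingDistL_append_right (by simp [Nat.add_comm]) u (w := v ++ u) (x := u ++ v)
  have hsecond :
      hammingDistL (u ++ (v ++ u)) ((u ++ u) ++ v) = hammingDistL (u ++ v) (v ++ u) := by
    rw [List.append_assoc, hammingDistL_append_left, hammingDistL_comm]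
  have htri := hammingDistL_le_add (w := v ++ (u ++ u)) (x := u ++ (v ++ u)) (y := (u ++ u) ++ v)
    (by simp; omega) (by simp; omega)
  omega

section Density

variable {D : Set ℤ} {t : ℤ → ℤ} {L C : ℕ}

theorem add_mul_le_of_gap (hgap : ∀ n, t n + L ≤ t (n + 1)) (m : ℤ) (k : ℕ) :
    t m + k * L ≤ t (m + k) := by
  induction k with
  | zero => simp
  | succ k ih =>
    have := hgap (m + k)
    push_cast
    rw [← add_assoc]
    linarith

theorem ncard_inter_Ico_le_mul (hmono : Monotone t)
    (hC : ∀ n, (D ∩ Set.Ico (t n) (t (n + 1))).ncard ≤ C) (m : ℤ) (k : ℕ) :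
    (D ∩ Set.Ico (t m) (t (m + k))).ncard ≤ k * C := by
  induction k with
  | zero => simp
  | succ k ih =>
    push_cast
    rw [← add_assoc, ← Set.Ico_union_Ico_eq_Ico (hmono (show m ≤ m + k by omega))
      (hmono (show m + k ≤ m + k + 1 by omega)),
      Set.inter_union_distrib_left]
    calc _ ≤ _ := Set.ncard_union_le _ _
      _ ≤ k * C + C := add_le_add ih (hC _)
      _ = (k + 1) * C := by ring

theorem upperDensityLE_of_blocks (hL : 0 < L) (hgap : ∀ n, t n + L ≤ t (n + 1))
    (hcover : ∀ m : ℤ, ∃ n : ℤ, t n ≤ m ∧ m < t (n + 1))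
    (hC : ∀ n, (D ∩ Set.Ico (t n) (t (n + 1))).ncard ≤ C) :
    UpperDensityLE D (C / L) := by
  intro ε hε
  refine ⟨⌈2 * C / ε⌉₊, fun N hN M => ?_⟩
  obtain ⟨n₀, hn₀, hn₀'⟩ := hcover (M + 1)
  obtain ⟨n₁, hn₁, hn₁'⟩ := hcover (M + N)
  have hmono : Monotone t := (strictMono_int_of_lt_succ fun n => by
    linarith [hgap n, (Nat.cast_pos.2 hL : (0 : ℤ) < L)]).monotone
  have hn₀n₁ : n₀ ≤ n₁ + 1 := by
    by_contra! h
    linarith [hmono (show n₁ + 1 + 1 ≤ n₀ by omega), hgap (n₁ + 1)]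
  set k := (n₁ + 1 - n₀).toNat
  have hend : n₀ + k = n₁ + 1 := by omega
  have hcount : (D ∩ Set.Icc (M + 1) (M + N)).ncard ≤ k * C := by
    refine (Set.ncard_le_ncard ?_ ((Set.finite_Ico _ _).inter_of_right _)).trans
      (ncard_inter_Ico_le_mul hmono hC n₀ k)
    rw [hend]
    exact Set.inter_subset_inter_right _ fun s hs => ⟨by linarith [hs.1], by linarith [hs.2]⟩
  -- all blocks but the first and the last lie inside the window
  have hblocks : (k : ℤ) * L ≤ N + 2 * L := by
    rcases le_or_gt 2 k with h2 | h2
    · have := add_mul_le_of_gap hgap (n₀ + 1) (k - 2)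
      rw [show n₀ + 1 + ((k - 2 : ℕ) : ℤ) = n₁ by omega, Nat.cast_sub h2,
        Nat.cast_ofNat] at this
      linarith [show ((k : ℤ) - 2) * L = k * L - 2 * L by ring]
    · nlinarith
  have hLR : (0 : ℝ) < L := Nat.cast_pos.2 hL
  have hkR : (k : ℝ) ≤ N / L + 2 := by
    rw [div_add' _ _ _ hLR.ne', le_div_iff₀ hLR]
    exact_mod_cast hblocks
  have hNR : 2 * (C : ℝ) ≤ ε * N := by
    have := (Nat.le_ceil (2 * C / ε)).trans (Nat.cast_le.2 hN)
    rw [div_le_iff₀ hε] at this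
    linarith
  calc ((D ∩ Set.Icc (M + 1) (M + N)).ncard : ℝ)
      ≤ k * C := by exact_mod_cast hcount
    _ ≤ (N / L + 2) * C := by gcongr
    _ = C / L * N + 2 * C := by ring
    _ ≤ (C / L + ε) * N := by linarith

end Density

theorem UpperDensityLE.mono {D : Set ℤ} {c c' : ℝ} (h : UpperDensityLE D c) (hc : c ≤ c') :
    UpperDensityLE D c' := by
  intro ε hε
  obtain ⟨N₀, hN₀⟩ := h ε hε
  exact ⟨N₀, fun N hN M => (hN₀ N hN M).trans (by gcongr)⟩

theorem stmt18_general {A : Type*} [DecidableEq A]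
    (u v : List A)
    (L' : ℕ) (hL' : 0 < L')
    (x : ℤ → A)
    (t : ℤ → ℤ)
    (hcover : ∀ m : ℤ, ∃ n : ℤ, t n ≤ m ∧ m < t (n + 1))
    (hblocks : ∀ n : ℤ, ∃ i j : ℕ, 1 ≤ i ∧ (j = 1 ∨ j = 2) ∧
      (L' : ℤ) ≤ t (n + 1) - t n ∧
      t (n + 1) = t n + ((wordPow v i ++ wordPow u j).length : ℤ) ∧
      ∀ k : Fin (wordPow v i ++ wordPow u j).length,
        x (t n + ((k : ℕ) : ℤ)) = (wordPow v i ++ wordPow u j).get k) :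
    UpperDensityLE {s : ℤ | x s ≠ x (s + (v.length : ℤ))}
        ((2 * max (hammingDistL (v ++ u) (u ++ v))
            (hammingDistL (v ++ (u ++ u)) ((u ++ u) ++ v)) : ℝ) / (L' : ℝ)) ∧
    UpperDensityLE {s : ℤ | x s ≠ x (s + (v.length : ℤ))}
        ((4 * hammingDistL (u ++ v) (v ++ u) : ℝ) / (L' : ℝ)) := by
  have hgap (n : ℤ) : t n + L' ≤ t (n + 1) := by
    obtain ⟨-, -, -, -, h, -⟩ := hblocks n
    linarith
  have hC (n : ℤ) : ({s | x s ≠ x (s + v.length)} ∩ Set.Ico (t n) (t (n + 1))).ncard ≤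
      max (hammingDistL (v ++ u) (u ++ v)) (hammingDistL (v ++ (u ++ u)) ((u ++ u) ++ v)) := by
    obtain ⟨i, j, hi, hj, -, hnext, hread⟩ := hblocks n
    obtain ⟨i', j', hi', -, -, -, hread'⟩ := hblocks (n + 1)
    obtain ⟨i, rfl⟩ := Nat.exists_eq_add_of_le' hi
    obtain ⟨i', rfl⟩ := Nat.exists_eq_add_of_le' hi'
    have hnextv : ReadsAt x (t (n + 1)) v := by
      have h : ReadsAt x (t (n + 1)) (v ++ (wordPow v i' ++ wordPow u j')) := by
        rw [← List.append_assoc, ← wordPow_succ]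
        exact hread'
      exact (readsAt_append.1 h).1
    rw [hnext] at hnextv ⊢
    rw [ncard_mismatch_block_eq_hammingDistL u v i j (readsAt_append.2 ⟨hread, hnextv⟩)]
    rcases hj with rfl | rfl
    · rw [wordPow_one]
      exact le_max_left _ _
    · rw [wordPow_two]
      exact le_max_right _ _
  have hdensity := upperDensityLE_of_blocks hL' hgap hcover hC
  have hmax := max_hammingDistL_le u v
  refine ⟨hdensity.mono ?_, hdensity.mono ?_⟩ <;> gcongr
  · exact_mod_cast Nat.le_mul_of_pos_left _ two_pos
  · exact_mod_cast hmax.trans (by omega)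

/-- For a subshift all of whose points are mean almost periodic: if `x ∈ X` decomposes into
blocks `v^i u^j` (`i ≥ 1`, `j ∈ {1,2}`) of length at least `L'`, then the upper density of
`{t : x_t ≠ (σ^{|v|}x)_t}` is at most `(2/L')·max(d(vu,uv), d(vu²,u²v))`, and in particular
at most `4·d(uv,vu)/L'`. -/
theorem stmt18 {A : Type*} [DecidableEq A] [TopologicalSpace A] [DiscreteTopology A]
    (X : Set (ℤ → A)) (hXc : IsClosed X) (hXi : ∀ x, x ∈ X ↔ shiftMap x ∈ X)
    (hmap : ∀ x ∈ X, ∀ ε : ℝ, 0 < ε → ∃ S : Set ℕ, Syndetic S ∧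
      ∀ s ∈ S, UpperDensityLE {t : ℤ | x t ≠ x (t + (s : ℤ))} ε)
    (u v : List A) (hv : v ≠ []) (hlen : v.length < u.length)
    (L' : ℕ) (hL' : 0 < L')
    (x : ℤ → A) (hx : x ∈ X)
    (t : ℤ → ℤ) (ht : StrictMono t)
    (hcover : ∀ m : ℤ, ∃ n : ℤ, t n ≤ m ∧ m < t (n + 1))
    (hblocks : ∀ n : ℤ, ∃ i j : ℕ, 1 ≤ i ∧ (j = 1 ∨ j = 2) ∧
      (L' : ℤ) ≤ t (n + 1) - t n ∧
      t (n + 1) = t n + ((wordPow v i ++ wordPow u j).length : ℤ) ∧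
      ∀ k : Fin (wordPow v i ++ wordPow u j).length,
        x (t n + ((k : ℕ) : ℤ)) = (wordPow v i ++ wordPow u j).get k) :
    UpperDensityLE {s : ℤ | x s ≠ x (s + (v.length : ℤ))}
        ((2 * max (hammingDistL (v ++ u) (u ++ v))
            (hammingDistL (v ++ (u ++ u)) ((u ++ u) ++ v)) : ℝ) / (L' : ℝ)) ∧
    UpperDensityLE {s : ℤ | x s ≠ x (s + (v.length : ℤ))}
        ((4 * hammingDistL (u ++ v) (v ++ u) : ℝ) / (L' : ℝ)) :=
  stmt18_general u v L' hL' x t hcover hblocks
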